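/- If P(a₁a₂|x₁x₂) = Q₁(a₁|x₁)·Q₂(a₂|x₂) is a product of two local probability distributions, then the CHSH-variant expression I = P(00|00) − P(01|01) − P(10|10) − P(00|11) satisfies I ≤ 0. -/

import Mathlib

/-!
Writing `a = Q₁(0|0)`, `b = Q₂(0|0)`, `c = Q₁(0|1)`, `d = Q₂(0|1)`, the expression is
`I = ab − a(1 − d) − (1 − c)b − cd`, and
`−I = a(1 − b)(1 − d) + b(1 − a)(1 − c) + cd(1 − ab) + ab(1 − c)(1 − d)`
is a sum of products of numbers in `[0, 1]`.
-/

open Set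

theorem chsh_variant_nonpos {a b c d : ℝ} (ha : a ∈ Icc 0 1) (hb : b ∈ Icc 0 1)
    (hc : c ∈ Icc 0 1) (hd : d ∈ Icc 0 1) :
    a * b - a * (1 - d) - (1 - c) * b - c * d ≤ 0 := by
  obtain ⟨ha₀, ha₁⟩ := ha
  obtain ⟨hb₀, hb₁⟩ := hb
  obtain ⟨hc₀, hc₁⟩ := hc
  obtain ⟨hd₀, hd₁⟩ := hd
  have hab : a * b ≤ 1 := mul_le_one₀ ha₁ hb₀ hb₁
  have certificate : a * (1 - d) + (1 - c) * b + c * d - a * b =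
      a * (1 - b) * (1 - d) + b * (1 - a) * (1 - c) + c * d * (1 - a * b)
        + a * b * (1 - c) * (1 - d) := by
    ring
  have h₁ : 0 ≤ a * (1 - b) * (1 - d) := by
    apply mul_nonneg (mul_nonneg _ _) <;> linarith
  have h₂ : 0 ≤ b * (1 - a) * (1 - c) := by
    apply mul_nonneg (mul_nonneg _ _) <;> linarith
  have h₃ : 0 ≤ c * d * (1 - a * b) := by
    apply mul_nonneg (mul_nonneg _ _) <;> linarith
  have h₄ : 0 ≤ a * b * (1 - c) * (1 - d) := by
    apply mul_nonneg (mul_nonneg (mul_nonneg _ _) _) <;> linarith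
  linarith

theorem stmt1 (Q₁ Q₂ : Fin 2 → Fin 2 → ℝ)
    (h1pos : ∀ a x, 0 ≤ Q₁ a x) (h2pos : ∀ a x, 0 ≤ Q₂ a x)
    (h1sum : ∀ x, Q₁ 0 x + Q₁ 1 x = 1) (h2sum : ∀ x, Q₂ 0 x + Q₂ 1 x = 1)
    (P : Fin 2 → Fin 2 → Fin 2 → Fin 2 → ℝ)
    (hP : ∀ a₁ a₂ x₁ x₂, P a₁ a₂ x₁ x₂ = Q₁ a₁ x₁ * Q₂ a₂ x₂) :
    P 0 0 0 0 - P 0 1 0 1 - P 1 0 1 0 - P 0 0 1 1 ≤ 0 := by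
  have mem_Icc {Q : Fin 2 → Fin 2 → ℝ} (hpos : ∀ a x, 0 ≤ Q a x)
      (hsum : ∀ x, Q 0 x + Q 1 x = 1) (x : Fin 2) : Q 0 x ∈ Icc 0 1 :=
    ⟨hpos 0 x, by linarith [hpos 1 x, hsum x]⟩
  simp only [hP, eq_sub_of_add_eq' (h1sum 1), eq_sub_of_add_eq' (h2sum 1)]
  exact chsh_variant_nonpos (mem_Icc h1pos h1sum 0) (mem_Icc h2pos h2sum 0)
    (mem_Icc h1pos h1sum 1) (mem_Icc h2pos h2sum 1)
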